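/- arXiv:1107.2639 — 6 statements merged into one kernel-verified Lean document; each statement's English description precedes it below -/
import Mathlib

section
/- Let P be a partial latin square of order n, T a set of cells of P, and f ∈ T a filled cell. Then the Hall Inequality Σ_σ α(σ,T) ≥ |T| holds if and only if the Hall Inequality Σ_σ α(σ,T∖{f}) ≥ |T∖{f}| holds. -/
/-!
A filled cell `f` containing `τ` supports `τ` and no other symbol. For `σ ≠ τ` it is therefore
irrelevant to `α(σ, ·)`. For `σ = τ` no other cell supporting `τ` can share a row or column
with `f` (a filled one would repeat `τ`, an empty one would see `τ` in its row or column), so `f`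
extends every independent `τ`-supporting subset of `T ∖ {f}`: `α(τ, T) = α(τ, T ∖ {f}) + 1`.
Hence removing `f` lowers both sides of the Hall Inequality by exactly one.
-/

open scoped Classical

section PLS

variable {n : ℕ}

/-- A partial latin square of order `n`: an `n × n` array of optional symbols,
no symbol occurring twice in any row or column. -/
def IsPLS (n : ℕ) (P : Fin n → Fin n → Option (Fin n)) : Prop :=
  (∀ i j j' σ, P i j = some σ → P i j' = some σ → j = j') ∧
  (∀ i i' j σ, P i j = some σ → P i' j = some σ → i = i')

/-- `σ` is missing from row `i`. -/
def MissingRow (P : Fin n → Fin n → Option (Fin n)) (σ i : Fin n) : Prop :=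
  ∀ j, P i j ≠ some σ

/-- `σ` is missing from column `j`. -/
def MissingCol (P : Fin n → Fin n → Option (Fin n)) (σ j : Fin n) : Prop :=
  ∀ i, P i j ≠ some σ

/-- A cell supports `σ` if it contains `σ`, or is empty and `σ` is missing from
its row and column. -/
def Supports (P : Fin n → Fin n → Option (Fin n)) (σ : Fin n) (c : Fin n × Fin n) : Prop :=
  P c.1 c.2 = some σ ∨ (P c.1 c.2 = none ∧ MissingRow P σ c.1 ∧ MissingCol P σ c.2)

/-- A set of cells is independent if no two share a row or a column. -/
def IndepCells (S : Finset (Fin n × Fin n)) : Prop :=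
  ∀ c ∈ S, ∀ c' ∈ S, c ≠ c' → c.1 ≠ c'.1 ∧ c.2 ≠ c'.2

/-- `alpha P σ T` : max size of an independent subset of `T` all of whose cells support `σ`. -/
noncomputable def alpha (P : Fin n → Fin n → Option (Fin n)) (σ : Fin n)
    (T : Finset (Fin n × Fin n)) : ℕ :=
  (T.powerset.filter (fun S => IndepCells S ∧ ∀ c ∈ S, Supports P σ c)).sup Finset.card

/-- Hall's Condition: every set of cells satisfies the Hall Inequality. -/
def HallCond (n : ℕ) (P : Fin n → Fin n → Option (Fin n)) : Prop :=
  ∀ T : Finset (Fin n × Fin n), T.card ≤ ∑ σ : Fin n, alpha P σ T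

/-- A latin square of order `n`. -/
def IsLatin (n : ℕ) (L : Fin n → Fin n → Fin n) : Prop :=
  (∀ i, Function.Injective (L i)) ∧ (∀ j, Function.Injective fun i => L i j)

/-- `L` is a completion of `P`. -/
def Completes (n : ℕ) (P : Fin n → Fin n → Option (Fin n)) (L : Fin n → Fin n → Fin n) : Prop :=
  IsLatin n L ∧ ∀ i j σ, P i j = some σ → L i j = σ

end PLS

open Finset

section HallInequality

variable {n : ℕ} {P : Fin n → Fin n → Option (Fin n)} {σ τ : Fin n}
  {S T : Finset (Fin n × Fin n)} {c f : Fin n × Fin n}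

lemma IndepCells.mono (hS : IndepCells S) (h : T ⊆ S) : IndepCells T :=
  fun c hc c' hc' => hS c (h hc) c' (h hc')

lemma IndepCells.insert (hS : IndepCells S) (hf : ∀ c ∈ S, c ≠ f → c.1 ≠ f.1 ∧ c.2 ≠ f.2) :
    IndepCells (insert f S) := by
  intro c hc c' hc' hne
  rcases mem_insert.mp hc with rfl | hcS <;> rcases mem_insert.mp hc' with rfl | hc'S
  · exact absurd rfl hne
  · exact (hf c' hc'S (Ne.symm hne)).imp Ne.symm Ne.symm
  · exact hf c hcS hne
  · exact hS c hcS c' hc'S hne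

lemma le_alpha (hST : S ⊆ T) (hS : IndepCells S) (hsupp : ∀ c ∈ S, Supports P σ c) :
    S.card ≤ alpha P σ T :=
  le_sup (f := card) (mem_filter.mpr ⟨mem_powerset.mpr hST, hS, hsupp⟩)

lemma alpha_le_iff {k : ℕ} :
    alpha P σ T ≤ k ↔
      ∀ S ⊆ T, IndepCells S → (∀ c ∈ S, Supports P σ c) → S.card ≤ k := by
  simp only [alpha, Finset.sup_le_iff, mem_filter, mem_powerset, and_imp]

lemma exists_card_eq_alpha (P : Fin n → Fin n → Option (Fin n)) (σ : Fin n)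
    (T : Finset (Fin n × Fin n)) :
    ∃ S ⊆ T, IndepCells S ∧ (∀ c ∈ S, Supports P σ c) ∧ S.card = alpha P σ T := by
  have hne : (T.powerset.filter fun S => IndepCells S ∧ ∀ c ∈ S, Supports P σ c).Nonempty :=
    ⟨∅, by simp [IndepCells]⟩
  obtain ⟨S, hS, hcard⟩ := exists_mem_eq_sup _ hne card
  simp only [mem_filter, mem_powerset] at hS
  exact ⟨S, hS.1, hS.2.1, hS.2.2, hcard.symm⟩

lemma alpha_mono (h : S ⊆ T) : alpha P σ S ≤ alpha P σ T :=
  alpha_le_iff.mpr fun _ hS' hind hsupp => le_alpha (hS'.trans h) hind hsupp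

lemma alpha_le_alpha_erase_add_one (P : Fin n → Fin n → Option (Fin n)) (σ : Fin n)
    (T : Finset (Fin n × Fin n)) (c : Fin n × Fin n) :
    alpha P σ T ≤ alpha P σ (T.erase c) + 1 := by
  refine alpha_le_iff.mpr fun S hST hind hsupp => ?_
  have := le_alpha (P := P) (erase_subset_erase c hST) (hind.mono (erase_subset c S))
    fun d hd => hsupp d (mem_of_mem_erase hd)
  have := pred_card_le_card_erase (s := S) (a := c)
  omega

lemma Supports.eq_of_eq_some (h : Supports P σ c) (hc : P c.1 c.2 = some τ) : σ = τ := by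
  rcases h with h | h
  · exact Option.some.inj (h.symm.trans hc)
  · simp [hc] at h

lemma alpha_erase_of_not_supports (h : ¬ Supports P σ c) :
    alpha P σ (T.erase c) = alpha P σ T := by
  refine le_antisymm (alpha_mono (erase_subset c T)) (alpha_le_iff.mpr fun S hST hind hsupp => ?_)
  have hcS : c ∉ S := fun hc => h (hsupp c hc)
  exact le_alpha (fun d hd => mem_erase.mpr ⟨fun hdc => hcS (hdc ▸ hd), hST hd⟩) hind hsupp

lemma Supports.independent_of_eq_some (hP : IsPLS n P) (h : Supports P σ c)
    (hf : P f.1 f.2 = some σ) (hcf : c ≠ f) : c.1 ≠ f.1 ∧ c.2 ≠ f.2 := by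
  rcases h with hc | ⟨-, hrow, hcol⟩
  · refine ⟨fun h1 => hcf (Prod.ext h1 ?_), fun h2 => hcf (Prod.ext ?_ h2)⟩
    · exact hP.1 c.1 c.2 f.2 σ hc (h1 ▸ hf)
    · exact hP.2 c.1 f.1 c.2 σ hc (h2 ▸ hf)
  · exact ⟨fun h1 => hrow f.2 (h1 ▸ hf), fun h2 => hcol f.1 (h2 ▸ hf)⟩

lemma alpha_erase_add_one_le (hP : IsPLS n P) (hf : f ∈ T) (hfσ : P f.1 f.2 = some σ) :
    alpha P σ (T.erase f) + 1 ≤ alpha P σ T := by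
  obtain ⟨S, hST, hind, hsupp, hcard⟩ := exists_card_eq_alpha P σ (T.erase f)
  have hfS : f ∉ S := fun h => (mem_erase.mp (hST h)).1 rfl
  have hins : (insert f S).card ≤ alpha P σ T := by
    refine le_alpha (insert_subset hf (hST.trans (erase_subset f T)))
      (hind.insert fun c hc => (hsupp c hc).independent_of_eq_some hP hfσ) ?_
    intro c hc
    rcases mem_insert.mp hc with rfl | hc
    · exact Or.inl hfσ
    · exact hsupp c hc
  rwa [card_insert_of_notMem hfS, hcard] at hins

lemma alpha_eq_alpha_erase_add_ite (hP : IsPLS n P) (hf : f ∈ T) (hfτ : P f.1 f.2 = some τ)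
    (σ : Fin n) : alpha P σ T = alpha P σ (T.erase f) + if σ = τ then 1 else 0 := by
  split_ifs with hστ
  · subst hστ
    exact le_antisymm (alpha_le_alpha_erase_add_one P σ T f) (alpha_erase_add_one_le hP hf hfτ)
  · exact (alpha_erase_of_not_supports fun h => hστ (h.eq_of_eq_some hfτ)).symm

lemma sum_alpha_eq_sum_alpha_erase_add_one (hP : IsPLS n P) (hf : f ∈ T)
    (hfill : P f.1 f.2 ≠ none) :
    ∑ σ : Fin n, alpha P σ T = ∑ σ : Fin n, alpha P σ (T.erase f) + 1 := by
  obtain ⟨τ, hτ⟩ := Option.ne_none_iff_exists'.mp hfill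
  simp [alpha_eq_alpha_erase_add_ite hP hf hτ, sum_add_distrib]

end HallInequality

theorem stmt1 (n : ℕ) (P : Fin n → Fin n → Option (Fin n)) (hP : IsPLS n P)
    (T : Finset (Fin n × Fin n)) (f : Fin n × Fin n) (hf : f ∈ T)
    (hfill : P f.1 f.2 ≠ none) :
    (T.card ≤ ∑ σ : Fin n, alpha P σ T) ↔
      ((T.erase f).card ≤ ∑ σ : Fin n, alpha P σ (T.erase f)) := by
  rw [sum_alpha_eq_sum_alpha_erase_add_one hP hf hfill, card_erase_of_mem hf]
  have := card_pos.mpr ⟨f, hf⟩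
  omega
end

section
/- A partial latin square P of order n satisfies Hall's Condition if and only if the Hall Inequality Σ_σ α(σ,T) ≥ |T| holds for every set T consisting only of empty cells of P. -/
open scoped Classical

theorem stmt2 (n : ℕ) (P : Fin n → Fin n → Option (Fin n)) (hP : IsPLS n P) :
    HallCond n P ↔
      ∀ T : Finset (Fin n × Fin n), (∀ c ∈ T, P c.1 c.2 = none) →
        T.card ≤ ∑ σ : Fin n, alpha P σ T := by
  constructor
  · intro h T _
    exact h T
  · intro h T
    set E : Finset (Fin n × Fin n) := T.filter (fun c => P c.1 c.2 = none) with hEdef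
    have hEsub : E ⊆ T := Finset.filter_subset _ _
    have hE : E.card ≤ ∑ σ : Fin n, alpha P σ E := by
      refine h E ?_
      intro c hc
      exact (Finset.mem_filter.mp hc).2
    -- key: alpha P σ T ≥ |F_σ| + alpha P σ E
    have key : ∀ σ : Fin n,
        (T.filter (fun c => P c.1 c.2 = some σ)).card + alpha P σ E ≤ alpha P σ T := by
      intro σ
      set Fσ : Finset (Fin n × Fin n) := T.filter (fun c => P c.1 c.2 = some σ) with hFdef
      -- get a maximal independent set in E
      set A := E.powerset.filter (fun S => IndepCells S ∧ ∀ c ∈ S, Supports P σ c) with hAdef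
      have hAne : A.Nonempty := by
        refine ⟨∅, ?_⟩
        simp [hAdef, IndepCells]
      obtain ⟨S, hSA, hSeq⟩ := Finset.exists_mem_eq_sup A hAne Finset.card
      have hSsub : S ⊆ E := Finset.mem_powerset.mp (Finset.mem_filter.mp hSA).1
      have hSind : IndepCells S := (Finset.mem_filter.mp hSA).2.1
      have hSsup : ∀ c ∈ S, Supports P σ c := (Finset.mem_filter.mp hSA).2.2
      have hSnone : ∀ c ∈ S, P c.1 c.2 = none := fun c hc =>
        (Finset.mem_filter.mp (hSsub hc)).2
      have hSmiss : ∀ c ∈ S, MissingRow P σ c.1 ∧ MissingCol P σ c.2 := by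
        intro c hc
        rcases hSsup c hc with h1 | h2
        · rw [hSnone c hc] at h1; exact absurd h1 (by simp)
        · exact h2.2
      have hFsome : ∀ c ∈ Fσ, P c.1 c.2 = some σ := fun c hc =>
        (Finset.mem_filter.mp hc).2
      have hdisj : Disjoint S Fσ := by
        rw [Finset.disjoint_left]
        intro c hcS hcF
        have := hSnone c hcS
        rw [hFsome c hcF] at this
        exact absurd this (by simp)
      -- the union is independent and supports σ
      have hmem : S ∪ Fσ ∈ T.powerset.filter
          (fun U => IndepCells U ∧ ∀ c ∈ U, Supports P σ c) := by
        refine Finset.mem_filter.mpr ⟨Finset.mem_powerset.mpr ?_, ?_, ?_⟩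
        · exact Finset.union_subset (hSsub.trans hEsub) (Finset.filter_subset _ _)
        · intro c hc c' hc' hne
          rcases Finset.mem_union.mp hc with hcS | hcF <;>
            rcases Finset.mem_union.mp hc' with hc'S | hc'F
          · exact hSind c hcS c' hc'S hne
          · constructor
            · intro hrow
              exact (hSmiss c hcS).1 c'.2 (by rw [hrow]; exact hFsome c' hc'F)
            · intro hcol
              exact (hSmiss c hcS).2 c'.1 (by rw [hcol]; exact hFsome c' hc'F)
          · constructor
            · intro hrow
              exact (hSmiss c' hc'S).1 c.2 (by rw [← hrow]; exact hFsome c hcF)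
            · intro hcol
              exact (hSmiss c' hc'S).2 c.1 (by rw [← hcol]; exact hFsome c hcF)
          · constructor
            · intro hrow
              apply hne
              have := hP.1 c.1 c.2 c'.2 σ (hFsome c hcF)
                (by rw [hrow]; exact hFsome c' hc'F)
              exact Prod.ext hrow this
            · intro hcol
              apply hne
              have := hP.2 c.1 c'.1 c.2 σ (hFsome c hcF)
                (by rw [hcol]; exact hFsome c' hc'F)
              exact Prod.ext this hcol
        · intro c hc
          rcases Finset.mem_union.mp hc with hcS | hcF
          · exact hSsup c hcS
          · exact Or.inl (hFsome c hcF)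
      have hle : (S ∪ Fσ).card ≤ alpha P σ T := Finset.le_sup hmem
      rw [Finset.card_union_of_disjoint hdisj] at hle
      have : alpha P σ E = S.card := hSeq
      omega
    -- arithmetic: |T| = |E| + Σσ |F_σ|
    have hcard : T.card = E.card + ∑ σ : Fin n, (T.filter (fun c => P c.1 c.2 = some σ)).card := by
      have : ∀ c ∈ T, ((if P c.1 c.2 = none then 1 else 0) +
          ∑ σ : Fin n, if P c.1 c.2 = some σ then 1 else 0) = 1 := by
        intro c _
        cases hpc : P c.1 c.2 with
        | none => simp
        | some τ => simp
      calc T.card = ∑ c ∈ T, 1 := by simp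
        _ = ∑ c ∈ T, ((if P c.1 c.2 = none then 1 else 0) +
            ∑ σ : Fin n, if P c.1 c.2 = some σ then 1 else 0) :=
          (Finset.sum_congr rfl this).symm
        _ = E.card + ∑ σ : Fin n, (T.filter (fun c => P c.1 c.2 = some σ)).card := by
          rw [Finset.sum_add_distrib]
          congr 1
          · rw [hEdef, Finset.card_filter]
          · rw [Finset.sum_comm]
            exact Finset.sum_congr rfl fun σ _ => (Finset.card_filter _ _).symm
    calc T.card = E.card + ∑ σ : Fin n, (T.filter (fun c => P c.1 c.2 = some σ)).card := hcard
      _ ≤ (∑ σ : Fin n, alpha P σ E) +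
          ∑ σ : Fin n, (T.filter (fun c => P c.1 c.2 = some σ)).card := by
        exact Nat.add_le_add_right hE _
      _ = ∑ σ : Fin n, ((T.filter (fun c => P c.1 c.2 = some σ)).card + alpha P σ E) := by
        rw [Finset.sum_add_distrib]; ring
      _ ≤ ∑ σ : Fin n, alpha P σ T := Finset.sum_le_sum (fun σ _ => key σ)
end

section
/- Let P be a partial latin square of order n. Suppose a symbol σ is missing from exactly k rows and exactly k columns of P (and present in every other row and column), and T is a set of empty cells of P containing exactly t cells that support σ. Then α(σ,T) ≥ ⌈t/k⌉. -/
open scoped Classical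

/-!
The rows and columns missing `σ`, joined by the supporting cells of `T`, form a bipartite graph
with `t` edges in which every vertex has degree at most `k` (a row meets only the `k` columns
missing `σ`, and vice versa). A vertex cover of size `m` thus meets at most `k m` edges, so every
vertex cover has at least `t / k` vertices, and by König's theorem some matching, i.e. some
independent set of supporting cells, is as large.
-/

open Finset

section Matching

variable {α β : Type*}

def IsMatching (M : Finset (α × β)) : Prop :=
  Set.InjOn Prod.fst (M : Set (α × β)) ∧ Set.InjOn Prod.snd (M : Set (α × β))

theorem card_filter_fst_eq_le_card {S : Finset (α × β)} {B : Finset β}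
    (hS : ∀ p ∈ S, p.2 ∈ B) (a : α) : (S.filter (·.1 = a)).card ≤ B.card := by
  refine card_le_card_of_injOn Prod.snd (fun p hp => hS p (mem_filter.1 hp).1)
    fun p hp q hq h => ?_
  rw [coe_filter] at hp hq
  exact Prod.ext (hp.2.trans hq.2.symm) h

theorem card_filter_snd_eq_le_card {S : Finset (α × β)} {A : Finset α}
    (hS : ∀ p ∈ S, p.1 ∈ A) (b : β) : (S.filter (·.2 = b)).card ≤ A.card := by
  refine card_le_card_of_injOn Prod.fst (fun p hp => hS p (mem_filter.1 hp).1)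
    fun p hp q hq h => ?_
  rw [coe_filter] at hp hq
  exact Prod.ext h (hp.2.trans hq.2.symm)

theorem card_le_mul_of_covers {S : Finset (α × β)} {k : ℕ}
    (hrow : ∀ a, (S.filter (·.1 = a)).card ≤ k)
    (hcol : ∀ b, (S.filter (·.2 = b)).card ≤ k)
    {R : Finset α} {C : Finset β} (hcover : ∀ p ∈ S, p.1 ∈ R ∨ p.2 ∈ C) :
    S.card ≤ k * (R.card + C.card) := by
  have hsub : S ⊆ R.biUnion (fun a => S.filter (·.1 = a)) ∪
      C.biUnion (fun b => S.filter (·.2 = b)) := by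
    intro p hp
    rcases hcover p hp with h | h <;> simp [hp, h]
  calc S.card ≤ _ := card_le_card hsub
    _ ≤ _ := card_union_le _ _
    _ ≤ R.card * k + C.card * k := by
      gcongr
      · exact card_biUnion_le_card_mul _ _ _ fun a _ => hrow a
      · exact card_biUnion_le_card_mul _ _ _ fun b _ => hcol b
    _ = k * (R.card + C.card) := by ring

theorem exists_matching_of_card_le_card_biUnion_add (A : Finset α) (N : α → Finset β) (d : ℕ)
    (hN : ∀ W ⊆ A, W.card ≤ (W.biUnion N).card + d) :
    ∃ M : Finset (α × β), (∀ p ∈ M, p.1 ∈ A ∧ p.2 ∈ N p.1) ∧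
      IsMatching M ∧ A.card ≤ M.card + d := by
  -- `d` dummy vertices adjacent to every vertex of `A` turn the deficiency into Hall's condition
  let t : A → Finset (β ⊕ ℕ) := fun i => (N i).map .inl ∪ (range d).map .inr
  have hall : ∀ W : Finset A, W.card ≤ (W.biUnion t).card := by
    intro W
    rcases W.eq_empty_or_nonempty with rfl | ⟨i, hi⟩
    · simp
    have hW : W.biUnion t = ((W.map (.subtype _)).biUnion N).map .inl ∪ (range d).map .inr := by
      ext (j | m)
      · simp [t]
      · simp only [t, mem_biUnion, mem_union, mem_map, Function.Embedding.inl_apply,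
          Function.Embedding.inr_apply, reduceCtorEq, and_false, exists_false, false_or]
        exact ⟨fun ⟨_, _, h⟩ => h, fun h => ⟨i, hi, h⟩⟩
    rw [hW, card_union_of_disjoint (by simp [disjoint_left]), card_map, card_map, card_range]
    simpa using hN (W.map (.subtype _)) fun x hx => by
      obtain ⟨i, -, rfl⟩ := mem_map.1 hx
      exact i.2
  obtain ⟨g, hg, hgt⟩ := (all_card_le_biUnion_card_iff_exists_injective t).1 hall
  set M := (A ×ˢ A.biUnion N).filter (fun p => ∃ i : A, i.1 = p.1 ∧ g i = .inl p.2)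
  have hM : ∀ p ∈ M, ∃ i : A, i.1 = p.1 ∧ g i = .inl p.2 := fun p hp => (mem_filter.1 hp).2
  have hinl : ∀ i j, g i = .inl j → j ∈ N i := fun i j h => by
    simpa [t, h] using hgt i
  have hinr : ∀ i m, g i = .inr m → m < d := fun i m h => by
    simpa [t, h] using hgt i
  refine ⟨M, fun p hp => ?_, ⟨?_, ?_⟩, ?_⟩
  · obtain ⟨i, hip, hi⟩ := hM p hp
    exact hip ▸ ⟨i.2, hinl i _ hi⟩
  · intro p hp q hq h
    obtain ⟨i, hip, hi⟩ := hM p hp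
    obtain ⟨j, hjq, hj⟩ := hM q hq
    have hij : i = j := Subtype.ext (hip.trans (h.trans hjq.symm))
    rw [hij, hj, Sum.inl.injEq] at hi
    exact Prod.ext h hi.symm
  · intro p hp q hq h
    obtain ⟨i, hip, hi⟩ := hM p hp
    obtain ⟨j, hjq, hj⟩ := hM q hq
    have hij : i = j := hg (by rw [hi, hj, h])
    exact Prod.ext (hip.symm.trans (hij ▸ hjq)) h
  · have himage : univ.image g ⊆ M.image (fun p => .inl p.2) ∪ (range d).map .inr := by
      intro x hx
      obtain ⟨i, -, rfl⟩ := mem_image.1 hx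
      rcases hgi : g i with j | m
      · refine mem_union_left _
          (mem_image.2 ⟨(i.1, j), mem_filter.2 ⟨?_, i, rfl, hgi⟩, rfl⟩)
        exact mem_product.2 ⟨i.2, mem_biUnion.2 ⟨i, i.2, hinl i j hgi⟩⟩
      · exact mem_union_right _ (mem_map_of_mem _ (mem_range.2 (hinr i m hgi)))
    calc A.card = (univ.image g).card := by
          rw [card_image_of_injective _ hg, card_univ, Fintype.card_coe]
      _ ≤ _ := card_le_card himage
      _ ≤ _ := card_union_le _ _
      _ ≤ M.card + d := by rw [card_map, card_range]; gcongr; exact card_image_le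

theorem exists_matching_and_cover (S : Finset (α × β)) :
    ∃ M ⊆ S, IsMatching M ∧ ∃ (R : Finset α) (C : Finset β),
      (∀ p ∈ S, p.1 ∈ R ∨ p.2 ∈ C) ∧ R.card + C.card ≤ M.card := by
  set A := S.image Prod.fst
  set N : α → Finset β := fun a => (S.filter (·.1 = a)).image Prod.snd
  have mem_N : ∀ a b, b ∈ N a ↔ (a, b) ∈ S := by simp [N]
  -- `(A \ W₀, N W₀)` is a smallest cover among those of the form `(A \ W, N W)`; Hall's theorem
  -- with deficiency `|A|` minus its size yields a matching at least as large.
  obtain ⟨W₀, -, hmin⟩ := A.powerset.exists_min_image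
    (fun W => (A \ W).card + (W.biUnion N).card) ⟨∅, empty_mem_powerset A⟩
  obtain ⟨M, hMN, hM, hcard⟩ := exists_matching_of_card_le_card_biUnion_add A N
    (A.card - ((A \ W₀).card + (W₀.biUnion N).card)) fun W hW => by
      have hle := hmin W (mem_powerset.2 hW)
      rw [card_sdiff_of_subset hW] at hle
      have := card_le_card hW
      omega
  refine ⟨M, fun p hp => (mem_N p.1 p.2).1 (hMN p hp).2, hM, A \ W₀, W₀.biUnion N,
    fun p hp => ?_, ?_⟩
  · by_cases h : p.1 ∈ W₀
    · exact .inr (mem_biUnion.2 ⟨p.1, h, (mem_N p.1 p.2).2 hp⟩)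
    · exact .inl (mem_sdiff.2 ⟨mem_image_of_mem _ hp, h⟩)
  · have := hmin ∅ (empty_mem_powerset A)
    simp only [sdiff_empty, biUnion_empty, card_empty, add_zero] at this
    omega

theorem exists_matching_card_le_mul {S : Finset (α × β)} {k : ℕ}
    (hrow : ∀ a, (S.filter (·.1 = a)).card ≤ k)
    (hcol : ∀ b, (S.filter (·.2 = b)).card ≤ k) :
    ∃ M ⊆ S, IsMatching M ∧ S.card ≤ k * M.card := by
  obtain ⟨M, hMS, hM, R, C, hcover, hRC⟩ := exists_matching_and_cover S
  exact ⟨M, hMS, hM, (card_le_mul_of_covers hrow hcol hcover).trans (Nat.mul_le_mul_left k hRC)⟩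

end Matching

theorem IsMatching.indepCells {n : ℕ} {M : Finset (Fin n × Fin n)} (h : IsMatching M) :
    IndepCells M :=
  fun _ hc _ hc' hne => ⟨fun h₁ => hne (h.1 hc hc' h₁), fun h₂ => hne (h.2 hc hc' h₂)⟩

theorem ceil_div_le_of_le_mul {K : Type*} [Field K] [LinearOrder K] [IsStrictOrderedRing K]
    [FloorRing K] {t k a : ℕ} (h : t ≤ k * a) : ⌈(t : K) / k⌉ ≤ a := by
  rcases k.eq_zero_or_pos with rfl | hk
  · simp
  rw [Int.ceil_le, div_le_iff₀ (by exact_mod_cast hk)]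
  exact_mod_cast h.trans_eq (mul_comm k a)

theorem stmt3_general (n k t : ℕ) (P : Fin n → Fin n → Option (Fin n))
    (σ : Fin n)
    (hrow : (Finset.univ.filter (fun i => MissingRow P σ i)).card = k)
    (hcol : (Finset.univ.filter (fun j => MissingCol P σ j)).card = k)
    (T : Finset (Fin n × Fin n)) (hempty : ∀ c ∈ T, P c.1 c.2 = none)
    (ht : (T.filter (fun c => Supports P σ c)).card = t) :
    ⌈(t : ℚ) / (k : ℚ)⌉ ≤ (alpha P σ T : ℤ) := by
  set S := T.filter (fun c => Supports P σ c)
  have hS : ∀ c ∈ S, MissingRow P σ c.1 ∧ MissingCol P σ c.2 := fun c hc => by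
    obtain ⟨hcT, h | h⟩ := mem_filter.1 hc
    · simp [hempty c hcT] at h
    · exact h.2
  obtain ⟨M, hMS, hM, hSM⟩ := exists_matching_card_le_mul (S := S) (k := k)
    (fun i => hcol ▸ card_filter_fst_eq_le_card (fun c hc => by simp [(hS c hc).2]) i)
    (fun j => hrow ▸ card_filter_snd_eq_le_card (fun c hc => by simp [(hS c hc).1]) j)
  have halpha : M.card ≤ alpha P σ T :=
    le_sup (mem_filter.2 ⟨mem_powerset.2 (hMS.trans (filter_subset _ _)), hM.indepCells,
      fun c hc => (mem_filter.1 (hMS hc)).2⟩)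
  exact ceil_div_le_of_le_mul (ht ▸ hSM.trans (Nat.mul_le_mul_left k halpha))

theorem stmt3 (n k t : ℕ) (P : Fin n → Fin n → Option (Fin n)) (hP : IsPLS n P)
    (σ : Fin n)
    (hrow : (Finset.univ.filter (fun i => MissingRow P σ i)).card = k)
    (hcol : (Finset.univ.filter (fun j => MissingCol P σ j)).card = k)
    (T : Finset (Fin n × Fin n)) (hempty : ∀ c ∈ T, P c.1 c.2 = none)
    (ht : (T.filter (fun c => Supports P σ c)).card = t) :
    ⌈(t : ℚ) / (k : ℚ)⌉ ≤ (alpha P σ T : ℤ) :=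
  stmt3_general n k t P σ hrow hcol T hempty ht
end

section
/- Let P be a partial latin square of order n whose filled cells all lie in the upper-left r×s rectangle R, with every cell of R filled except possibly at most one empty cell per column of R. Let J be a subset of these empty cells, H the set of cells in the top r rows, ν(σ) the number of occurrences of σ in R, and ρ(σ) the number of rows containing an empty cell of R∖J that supports σ. Then α(σ,H∖J) = min{r, ν(σ)+ρ(σ)+n−s}. -/
open scoped Classical

/-! An independent set of cells supporting `σ` in the top `r` rows has at most `r` cells, and at
most `ν + ρ + (n - s)`: its cells holding `σ` are among the `ν` cells of `σ`, those right of the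
rectangle lie in distinct columns among `n - s`, and the remaining ones are empty cells of `R ∖ J`
supporting `σ`, in distinct rows counted by `ρ`.

Conversely, the `ν` cells of `σ`, together with one supporting cell of `R ∖ J` in each of the `ρ`
rows counted by `ρ`, are independent: these rows miss `σ`, and a column of `R` has at most one
empty cell. The top rows still unused can then be matched with the `n - s` columns right of `R`,
which are entirely empty. -/

open Finset

lemma card_filter_le_val (n s : ℕ) : #{j : Fin n | s ≤ (j : ℕ)} = n - s := by
  have hlt : #{j : Fin n | (j : ℕ) < s} = min n s := Fin.card_filter_val_lt
  have hsplit := card_filter_add_card_filter_not (s := (univ : Finset (Fin n)))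
    fun j : Fin n => (j : ℕ) < s
  simp only [not_lt, card_univ, Fintype.card_fin] at hsplit
  omega

section Cells

variable {n : ℕ}

lemma indepCells_iff {S : Finset (Fin n × Fin n)} :
    IndepCells S ↔ Set.InjOn Prod.fst (S : Set (Fin n × Fin n)) ∧
      Set.InjOn Prod.snd (S : Set (Fin n × Fin n)) := by
  constructor
  · intro h
    refine ⟨fun c hc d hd hcd => ?_, fun c hc d hd hcd => ?_⟩ <;> by_contra hne
    exacts [(h c hc d hd hne).1 hcd, (h c hc d hd hne).2 hcd]
  · rintro ⟨hfst, hsnd⟩ c hc d hd hne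
    exact ⟨fun h => hne (hfst hc hd h), fun h => hne (hsnd hc hd h)⟩

lemma IndepCells.union {S T : Finset (Fin n × Fin n)} (hS : IndepCells S) (hT : IndepCells T)
    (hrow : ∀ c ∈ S, ∀ d ∈ T, c.1 ≠ d.1) (hcol : ∀ c ∈ S, ∀ d ∈ T, c.2 ≠ d.2) :
    IndepCells (S ∪ T) := by
  intro c hc d hd hne
  rcases mem_union.1 hc with hc | hc <;> rcases mem_union.1 hd with hd | hd
  · exact hS c hc d hd hne
  · exact ⟨hrow c hc d hd, hcol c hc d hd⟩
  · exact ⟨(hrow d hd c hc).symm, (hcol d hd c hc).symm⟩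
  · exact hT c hc d hd hne

lemma exists_indepCells_subset_product (X Y : Finset (Fin n)) :
    ∃ S ⊆ X ×ˢ Y, IndepCells S ∧ #S = min #X #Y := by
  obtain ⟨X', hX', hX'card⟩ := exists_subset_card_eq (min_le_left #X #Y)
  obtain ⟨Y', hY', hY'card⟩ := exists_subset_card_eq (min_le_right #X #Y)
  set f := X'.orderEmbOfFin hX'card
  set g := Y'.orderEmbOfFin hY'card
  have hinj : Function.Injective fun k => (f k, g k) := fun k l h =>
    f.injective (congrArg Prod.fst h)
  refine ⟨univ.image fun k => (f k, g k), ?_, ?_, ?_⟩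
  · rintro _ hc
    obtain ⟨k, -, rfl⟩ := mem_image.1 hc
    exact mem_product.2
      ⟨hX' (X'.orderEmbOfFin_mem hX'card k), hY' (Y'.orderEmbOfFin_mem hY'card k)⟩
  · rw [indepCells_iff, coe_image]
    constructor <;> rintro _ ⟨k, -, rfl⟩ _ ⟨l, -, rfl⟩ h
    · rw [f.injective h]
    · rw [g.injective h]
  · rw [card_image_of_injective _ hinj, card_univ, Fintype.card_fin]

lemma exists_indepCells_card_eq_rows (E : Finset (Fin n × Fin n)) (p : Fin n × Fin n → Prop)
    (hE : Set.InjOn Prod.snd (E : Set (Fin n × Fin n))) :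
    ∃ S ⊆ E, (∀ c ∈ S, p c) ∧ IndepCells S ∧ #S = #{i | ∃ c ∈ E, c.1 = i ∧ p c} := by
  obtain ⟨S, hSE, hfst, himage⟩ := exists_subset_injOn_image_eq_of_surjOn (f := Prod.fst)
    (E.filter p : Set (Fin n × Fin n)) ((E.filter p).image Prod.fst)
    (by rw [coe_image]; exact Set.surjOn_image _ _)
  have hSE' : S ⊆ E.filter p := fun c hc => by simpa using hSE hc
  refine ⟨S, hSE'.trans (filter_subset _ _), fun c hc => (mem_filter.1 (hSE' hc)).2,
    indepCells_iff.2 ⟨hfst, hE.mono (by simpa using hSE'.trans (filter_subset _ _))⟩, ?_⟩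
  rw [← card_image_of_injOn hfst, himage]
  congr 1
  ext i
  simp

end Cells

section Support

variable {n : ℕ} {P : Fin n → Fin n → Option (Fin n)} {σ : Fin n} {T S : Finset (Fin n × Fin n)}

def IsIndepSupportIn (P : Fin n → Fin n → Option (Fin n)) (σ : Fin n)
    (T S : Finset (Fin n × Fin n)) : Prop :=
  S ⊆ T ∧ IndepCells S ∧ ∀ c ∈ S, Supports P σ c

lemma IsIndepSupportIn.card_le_alpha (hS : IsIndepSupportIn P σ T S) : #S ≤ alpha P σ T :=
  le_sup (f := card) (mem_filter.2 ⟨mem_powerset.2 hS.1, hS.2⟩)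

lemma alpha_le {m : ℕ} (h : ∀ S, IsIndepSupportIn P σ T S → #S ≤ m) : alpha P σ T ≤ m :=
  Finset.sup_le fun S hS => h S ⟨mem_powerset.1 (mem_filter.1 hS).1, (mem_filter.1 hS).2⟩

lemma Supports.missing_of_eq_none {c : Fin n × Fin n} (h : Supports P σ c)
    (hc : P c.1 c.2 = none) : MissingRow P σ c.1 ∧ MissingCol P σ c.2 := by
  rcases h with h | h
  · simp [hc] at h
  · exact h.2

end Support

section Rectangle

variable {n r s : ℕ} {P : Fin n → Fin n → Option (Fin n)} {σ : Fin n}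

def topCells (n r : ℕ) : Finset (Fin n × Fin n) :=
  univ.filter fun c => c.1.val < r

def emptyCells (r s : ℕ) (P : Fin n → Fin n → Option (Fin n)) : Finset (Fin n × Fin n) :=
  univ.filter fun c => c.1.val < r ∧ c.2.val < s ∧ P c.1 c.2 = none

def symbolCells (P : Fin n → Fin n → Option (Fin n)) (σ : Fin n) : Finset (Fin n × Fin n) :=
  univ.filter fun c => P c.1 c.2 = some σ

noncomputable def supportRows (P : Fin n → Fin n → Option (Fin n)) (σ : Fin n)
    (E : Finset (Fin n × Fin n)) : Finset (Fin n) :=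
  univ.filter fun i => ∃ c ∈ E, c.1 = i ∧ Supports P σ c

@[simp] lemma mem_topCells {c : Fin n × Fin n} : c ∈ topCells n r ↔ c.1.val < r := by
  simp [topCells]

@[simp] lemma mem_emptyCells {c : Fin n × Fin n} :
    c ∈ emptyCells r s P ↔ c.1.val < r ∧ c.2.val < s ∧ P c.1 c.2 = none := by
  simp [emptyCells]

@[simp] lemma mem_symbolCells {c : Fin n × Fin n} : c ∈ symbolCells P σ ↔ P c.1 c.2 = some σ := by
  simp [symbolCells]

@[simp] lemma mem_supportRows {E : Finset (Fin n × Fin n)} {i : Fin n} :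
    i ∈ supportRows P σ E ↔ ∃ c ∈ E, c.1 = i ∧ Supports P σ c := by
  simp [supportRows]

lemma IsPLS.indepCells_symbolCells (hP : IsPLS n P) : IndepCells (symbolCells P σ) := by
  refine indepCells_iff.2 ⟨fun c hc d hd h => ?_, fun c hc d hd h => ?_⟩ <;>
    simp only [mem_coe, mem_symbolCells] at hc hd
  · exact Prod.ext h (hP.1 c.1 c.2 d.2 σ hc (h ▸ hd))
  · exact Prod.ext (hP.2 c.1 d.1 c.2 σ hc (h ▸ hd)) h

lemma injOn_snd_emptyCells
    (hshape2 : ∀ j : Fin n, j.val < s →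
      (univ.filter fun i : Fin n => i.val < r ∧ P i j = none).card ≤ 1) :
    Set.InjOn Prod.snd (emptyCells r s P : Set (Fin n × Fin n)) := by
  intro c hc d hd h
  simp only [mem_coe, mem_emptyCells] at hc hd
  refine Prod.ext (card_le_one.1 (hshape2 c.2 hc.2.1) c.1 ?_ d.1 ?_) h
  · simp [hc.1, hc.2.2]
  · simp [hd.1, h, hd.2.2]

lemma IndepCells.card_le_of_subset_topCells {S : Finset (Fin n × Fin n)} (hS : IndepCells S)
    (hSr : S ⊆ topCells n r) : #S ≤ r :=
  calc #S ≤ #{i : Fin n | (i : ℕ) < r} :=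
        card_le_card_of_injOn Prod.fst (fun c hc => by simpa using hSr hc) (indepCells_iff.1 hS).1
    _ = min n r := Fin.card_filter_val_lt
    _ ≤ r := min_le_right n r

lemma IsIndepSupportIn.card_le_add {J S : Finset (Fin n × Fin n)}
    (hS : IsIndepSupportIn P σ (topCells n r \ J) S) :
    #S ≤ #(symbolCells P σ) + #(supportRows P σ (emptyCells r s P \ J)) + (n - s) := by
  obtain ⟨hSJ, hind, hsupp⟩ := hS
  obtain ⟨hfst, hsnd⟩ := indepCells_iff.1 hind
  set S₁ := S.filter fun c => P c.1 c.2 = some σ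
  set S₂ := S.filter fun c => P c.1 c.2 = none ∧ c.2.val < s
  set S₃ := S.filter fun c => s ≤ c.2.val
  have hcover : S ⊆ S₁ ∪ S₂ ∪ S₃ := by
    intro c hc
    simp only [S₁, S₂, S₃, mem_union, mem_filter]
    by_cases hcol : s ≤ c.2.val
    · exact Or.inr ⟨hc, hcol⟩
    · rcases hsupp c hc with h | h
      · exact Or.inl (Or.inl ⟨hc, h⟩)
      · exact Or.inl (Or.inr ⟨hc, h.1, by omega⟩)
  have h₁ : #S₁ ≤ #(symbolCells P σ) :=
    card_le_card fun c hc => mem_symbolCells.2 (mem_filter.1 hc).2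
  have h₂ : #S₂ ≤ #(supportRows P σ (emptyCells r s P \ J)) := by
    refine card_le_card_of_injOn Prod.fst (fun c hc => ?_) (hfst.mono (filter_subset _ _))
    obtain ⟨hcS, hnone, hcol⟩ := mem_filter.1 hc
    obtain ⟨hrow, hcJ⟩ := mem_sdiff.1 (hSJ hcS)
    exact mem_supportRows.2
      ⟨c, mem_sdiff.2 ⟨mem_emptyCells.2 ⟨mem_topCells.1 hrow, hcol, hnone⟩, hcJ⟩, rfl, hsupp c hcS⟩
  have h₃ : #S₃ ≤ n - s :=
    (card_le_card_of_injOn Prod.snd (fun c hc => by simpa using (mem_filter.1 hc).2)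
      (hsnd.mono (filter_subset _ _))).trans_eq (card_filter_le_val n s)
  calc #S ≤ #(S₁ ∪ S₂ ∪ S₃) := card_le_card hcover
    _ ≤ #S₁ + #S₂ + #S₃ := (card_union_le _ _).trans (Nat.add_le_add_right (card_union_le _ _) _)
    _ ≤ _ := by omega

lemma exists_isIndepSupportIn_card_eq (hP : IsPLS n P)
    (hshape1 : ∀ i j : Fin n, P i j ≠ none → i.val < r ∧ j.val < s)
    (hshape2 : ∀ j : Fin n, j.val < s →
      (univ.filter fun i : Fin n => i.val < r ∧ P i j = none).card ≤ 1)
    {J : Finset (Fin n × Fin n)} (hJ : J ⊆ emptyCells r s P) :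
    ∃ S, IsIndepSupportIn P σ (topCells n r \ J) S ∧ symbolCells P σ ⊆ S ∧
      (∀ c ∈ S, c.2.val < s) ∧
      #S = #(symbolCells P σ) + #(supportRows P σ (emptyCells r s P \ J)) := by
  obtain ⟨S₂, hS₂E, hS₂supp, hS₂ind, hS₂card⟩ := exists_indepCells_card_eq_rows
    (emptyCells r s P \ J) (Supports P σ)
    ((injOn_snd_emptyCells hshape2).mono (coe_subset.2 sdiff_subset))
  have hS₂ : ∀ c ∈ S₂, c.1.val < r ∧ c.2.val < s ∧ P c.1 c.2 = none ∧ c ∉ J := fun c hc => by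
    obtain ⟨hcE, hcJ⟩ := mem_sdiff.1 (hS₂E hc)
    obtain ⟨hrow, hcol, hnone⟩ := mem_emptyCells.1 hcE
    exact ⟨hrow, hcol, hnone, hcJ⟩
  have hS₂miss : ∀ c ∈ S₂, MissingRow P σ c.1 ∧ MissingCol P σ c.2 := fun c hc =>
    (hS₂supp c hc).missing_of_eq_none (hS₂ c hc).2.2.1
  have hσ : ∀ c ∈ symbolCells P σ, c.1.val < r ∧ c.2.val < s ∧ c ∉ J := fun c hc => by
    have hfilled := mem_symbolCells.1 hc
    obtain ⟨hrow, hcol⟩ := hshape1 c.1 c.2 (by simp [hfilled])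
    refine ⟨hrow, hcol, fun hcJ => ?_⟩
    simp [(mem_emptyCells.1 (hJ hcJ)).2.2] at hfilled
  have hdisj : Disjoint (symbolCells P σ) S₂ := disjoint_left.2 fun c hc hc₂ => by
    simp [(hS₂ c hc₂).2.2.1] at hc
  refine ⟨symbolCells P σ ∪ S₂, ⟨union_subset (fun c hc => ?_) (fun c hc => ?_),
    hP.indepCells_symbolCells.union hS₂ind (fun c hc d hd h => ?_) (fun c hc d hd h => ?_),
    fun c hc => ?_⟩, subset_union_left, fun c hc => ?_, ?_⟩
  · exact mem_sdiff.2 ⟨mem_topCells.2 (hσ c hc).1, (hσ c hc).2.2⟩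
  · exact mem_sdiff.2 ⟨mem_topCells.2 (hS₂ c hc).1, (hS₂ c hc).2.2.2⟩
  · exact (hS₂miss d hd).1 c.2 (h ▸ mem_symbolCells.1 hc)
  · exact (hS₂miss d hd).2 c.1 (h ▸ mem_symbolCells.1 hc)
  · rcases mem_union.1 hc with hc | hc
    · exact Or.inl (mem_symbolCells.1 hc)
    · exact hS₂supp c hc
  · rcases mem_union.1 hc with hc | hc
    exacts [(hσ c hc).2.1, (hS₂ c hc).2.1]
  · rw [card_union_of_disjoint hdisj, hS₂card]
    rfl

lemma IsIndepSupportIn.card_add_min_le_alpha (hrn : r ≤ n)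
    (hshape1 : ∀ i j : Fin n, P i j ≠ none → i.val < r ∧ j.val < s)
    {J S : Finset (Fin n × Fin n)} (hJ : J ⊆ emptyCells r s P)
    (hS : IsIndepSupportIn P σ (topCells n r \ J) S) (hσS : symbolCells P σ ⊆ S)
    (hSs : ∀ c ∈ S, c.2.val < s) :
    #S + min (r - #S) (n - s) ≤ alpha P σ (topCells n r \ J) := by
  obtain ⟨hSJ, hind, hsupp⟩ := hS
  set X := (univ.filter fun i : Fin n => i.val < r) \ S.image Prod.fst
  set Y := univ.filter fun j : Fin n => s ≤ j.val
  have hX : #X = r - #S := by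
    rw [card_sdiff_of_subset (fun i hi => ?_), card_image_of_injOn (indepCells_iff.1 hind).1,
      Fin.card_filter_val_lt, min_eq_right hrn]
    obtain ⟨c, hc, rfl⟩ := mem_image.1 hi
    simpa using (mem_sdiff.1 (hSJ hc)).1
  obtain ⟨A, hAXY, hAind, hAcard⟩ := exists_indepCells_subset_product X Y
  have hA : ∀ c ∈ A, c.1.val < r ∧ c.1 ∉ S.image Prod.fst ∧ s ≤ c.2.val := fun c hc => by
    obtain ⟨hcX, hcY⟩ := mem_product.1 (hAXY hc)
    obtain ⟨hrow, hnotS⟩ := mem_sdiff.1 hcX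
    exact ⟨(mem_filter.1 hrow).2, hnotS, (mem_filter.1 hcY).2⟩
  have hAempty : ∀ c ∈ A, ∀ i, P i c.2 = none := fun c hc i => by
    by_contra h
    have := (hshape1 i c.2 h).2
    have := (hA c hc).2.2
    omega
  have hdisj : Disjoint S A := disjoint_left.2 fun c hc hcA => by
    have := hSs c hc
    have := (hA c hcA).2.2
    omega
  have hunion : IsIndepSupportIn P σ (topCells n r \ J) (S ∪ A) := by
    refine ⟨union_subset hSJ fun c hc => ?_, hind.union hAind (fun c hc d hd h => ?_)
      (fun c hc d hd h => ?_), fun c hc => ?_⟩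
    · refine mem_sdiff.2 ⟨mem_topCells.2 (hA c hc).1, fun hcJ => ?_⟩
      have := (mem_emptyCells.1 (hJ hcJ)).2.1
      have := (hA c hc).2.2
      omega
    · exact (hA d hd).2.1 (mem_image.2 ⟨c, hc, h⟩)
    · have := hSs c hc
      have := (hA d hd).2.2
      omega
    · rcases mem_union.1 hc with hc | hc
      · exact hsupp c hc
      · refine Or.inr ⟨hAempty c hc c.1, fun j hj => (hA c hc).2.1 ?_, fun i hi => ?_⟩
        · exact mem_image.2 ⟨(c.1, j), hσS (mem_symbolCells.2 hj), rfl⟩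
        · simp [hAempty c hc i] at hi
  calc #S + min (r - #S) (n - s) = #(S ∪ A) := by
        rw [card_union_of_disjoint hdisj, hAcard, hX, card_filter_le_val]
    _ ≤ alpha P σ (topCells n r \ J) := hunion.card_le_alpha

end Rectangle

theorem stmt8_general (n r s : ℕ) (hrn : r ≤ n)
    (P : Fin n → Fin n → Option (Fin n)) (hP : IsPLS n P)
    (hshape1 : ∀ i j : Fin n, P i j ≠ none → i.val < r ∧ j.val < s)
    (hshape2 : ∀ j : Fin n, j.val < s →
      (Finset.univ.filter (fun i : Fin n => i.val < r ∧ P i j = none)).card ≤ 1)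
    (B : Finset (Fin n × Fin n))
    (hB : B = Finset.univ.filter
      (fun c : Fin n × Fin n => c.1.val < r ∧ c.2.val < s ∧ P c.1 c.2 = none))
    (J : Finset (Fin n × Fin n)) (hJ : J ⊆ B)
    (H : Finset (Fin n × Fin n))
    (hH : H = Finset.univ.filter (fun c : Fin n × Fin n => c.1.val < r))
    (σ : Fin n) (ν ρ : ℕ)
    (hν : ν = (Finset.univ.filter
      (fun c : Fin n × Fin n => P c.1 c.2 = some σ)).card)
    (hρ : ρ = (Finset.univ.filter
      (fun i : Fin n => ∃ c ∈ B \ J, c.1 = i ∧ Supports P σ c)).card) :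
    alpha P σ (H \ J) = min r (ν + ρ + (n - s)) := by
  subst hB hH
  replace hν : ν = #(symbolCells P σ) := hν
  replace hρ : ρ = #(supportRows P σ (emptyCells r s P \ J)) := hρ
  change alpha P σ (topCells n r \ J) = _
  obtain ⟨S, hS, hσS, hSs, hScard⟩ := exists_isIndepSupportIn_card_eq (σ := σ) hP hshape1 hshape2 hJ
  have hSr : #S ≤ r := hS.2.1.card_le_of_subset_topCells (hS.1.trans sdiff_subset)
  have hlower := hS.card_add_min_le_alpha hrn hshape1 hJ hσS hSs
  have hupper : alpha P σ (topCells n r \ J) ≤ min r (ν + ρ + (n - s)) := alpha_le fun T hT =>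
    le_min (hT.2.1.card_le_of_subset_topCells (hT.1.trans sdiff_subset))
      (hν ▸ hρ ▸ hT.card_le_add)
  omega

theorem stmt8 (n r s : ℕ) (hr : 1 ≤ r) (hrn : r ≤ n) (hs : 1 ≤ s) (hsn : s ≤ n)
    (P : Fin n → Fin n → Option (Fin n)) (hP : IsPLS n P)
    (hshape1 : ∀ i j : Fin n, P i j ≠ none → i.val < r ∧ j.val < s)
    (hshape2 : ∀ j : Fin n, j.val < s →
      (Finset.univ.filter (fun i : Fin n => i.val < r ∧ P i j = none)).card ≤ 1)
    (B : Finset (Fin n × Fin n))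
    (hB : B = Finset.univ.filter
      (fun c : Fin n × Fin n => c.1.val < r ∧ c.2.val < s ∧ P c.1 c.2 = none))
    (J : Finset (Fin n × Fin n)) (hJ : J ⊆ B)
    (H : Finset (Fin n × Fin n))
    (hH : H = Finset.univ.filter (fun c : Fin n × Fin n => c.1.val < r))
    (σ : Fin n) (ν ρ : ℕ)
    (hν : ν = (Finset.univ.filter
      (fun c : Fin n × Fin n => P c.1 c.2 = some σ)).card)
    (hρ : ρ = (Finset.univ.filter
      (fun i : Fin n => ∃ c ∈ B \ J, c.1 = i ∧ Supports P σ c)).card) :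
    alpha P σ (H \ J) = min r (ν + ρ + (n - s)) :=
  stmt8_general n r s hrn P hP hshape1 hshape2 B hB J hJ H hH σ ν ρ hν hρ
end

section
/- The 6×6 partial latin square whose first three rows are (1,2,3,4,5,6), (3,6,1,2,4,5), (5,4,2,6,3,1) and whose last three rows have first two columns filled with (2,5), (4,1), (6,3) respectively and remaining cells empty, satisfies Hall's Condition but is not completable to a latin square of order 6. -/
open scoped Classical

/-- Goldwasser's square (symbols `1,…,6` encoded as `0,…,5 : Fin 6`). -/
def goldwasser : Fin 6 → Fin 6 → Option (Fin 6) :=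
  ![![some 0, some 1, some 2, some 3, some 4, some 5],
    ![some 2, some 5, some 0, some 1, some 3, some 4],
    ![some 4, some 3, some 1, some 5, some 2, some 0],
    ![some 1, some 4, none, none, none, none],
    ![some 3, some 0, none, none, none, none],
    ![some 5, some 2, none, none, none, none]]

/-!
Each symbol `σ` has two independent sets of empty cells supporting it, the two diagonals of a
`2 × 2` block of empty cells, and every empty cell lies on exactly two of these twelve diagonals.
Adding either diagonal (intersected with `T`) to the filled cells of `T` holding `σ` gives an
independent set, so averaging over the two diagonals, `α(σ, T)` is at least the number of filled
cells of `T` holding `σ` plus half the number of cells of `T` on the diagonals of `σ`. Summing over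
`σ` gives `|T|`.

The square is nevertheless not completable, because rows 3 and 4 (counting from 0) cannot be
completed simultaneously: each of their empty cells supports exactly two symbols, and from either
value of the cell `(4, 2)` the row and column constraints force a repeated symbol in row 4.
-/

section PLS

variable {n : ℕ} {P : Fin n → Fin n → Option (Fin n)} {σ : Fin n}

instance (P : Fin n → Fin n → Option (Fin n)) (σ : Fin n) (c : Fin n × Fin n) :
    Decidable (Supports P σ c) := by
  unfold Supports MissingRow MissingCol; infer_instance

instance (S : Finset (Fin n × Fin n)) : Decidable (IndepCells S) := by
  unfold IndepCells; infer_instance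

instance (P : Fin n → Fin n → Option (Fin n)) : Decidable (IsPLS n P) := by
  unfold IsPLS; infer_instance

theorem IndepCells.mono_s10 {S S' : Finset (Fin n × Fin n)} (hS : IndepCells S) (h : S' ⊆ S) :
    IndepCells S' :=
  fun c hc c' hc' hne => hS c (h hc) c' (h hc') hne

theorem card_le_alpha {S T : Finset (Fin n × Fin n)} (hST : S ⊆ T) (hS : IndepCells S)
    (hsupp : ∀ c ∈ S, Supports P σ c) : S.card ≤ alpha P σ T :=
  Finset.le_sup (f := Finset.card) <| by
    simp only [Finset.mem_filter, Finset.mem_powerset]; exact ⟨hST, hS, hsupp⟩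

theorem IsPLS.separated_of_supports (hP : IsPLS n P) {c c' : Fin n × Fin n}
    (hc : P c.1 c.2 = some σ) (hc' : Supports P σ c') (hne : c ≠ c') :
    c.1 ≠ c'.1 ∧ c.2 ≠ c'.2 := by
  rcases hc' with hc' | ⟨-, hrow, hcol⟩
  · exact ⟨fun h => hne (Prod.ext h (hP.1 _ _ _ σ hc (h ▸ hc'))),
      fun h => hne (Prod.ext (hP.2 _ _ _ σ hc (h ▸ hc')) h)⟩
  · exact ⟨fun h => hrow c.2 (h ▸ hc), fun h => hcol c.1 (h ▸ hc)⟩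

theorem IsPLS.indepCells_union (hP : IsPLS n P) {F S : Finset (Fin n × Fin n)}
    (hF : ∀ c ∈ F, P c.1 c.2 = some σ) (hS : IndepCells S) (hSsupp : ∀ c ∈ S, Supports P σ c) :
    IndepCells (F ∪ S) := by
  have hsupp : ∀ c ∈ F ∪ S, Supports P σ c := fun c hc =>
    (Finset.mem_union.mp hc).elim (fun hc => Or.inl (hF c hc)) (hSsupp c)
  intro c hc c' hc' hne
  rcases Finset.mem_union.mp hc with hcF | hcS
  · exact hP.separated_of_supports (hF c hcF) (hsupp c' hc') hne
  rcases Finset.mem_union.mp hc' with hcF' | hcS'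
  · exact (hP.separated_of_supports (hF c' hcF') (hsupp c hc) hne.symm).imp Ne.symm Ne.symm
  · exact hS c hcS c' hcS' hne

theorem IsPLS.card_filter_eq_some_add_card_filter_mem_le_alpha (hP : IsPLS n P)
    {D : Finset (Fin n × Fin n)} (hD : IndepCells D)
    (hDsupp : ∀ c ∈ D, P c.1 c.2 = none ∧ Supports P σ c) (T : Finset (Fin n × Fin n)) :
    {c ∈ T | P c.1 c.2 = some σ}.card + {c ∈ T | c ∈ D}.card ≤ alpha P σ T := by
  have hdisj : Disjoint {c ∈ T | P c.1 c.2 = some σ} {c ∈ T | c ∈ D} :=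
    Finset.disjoint_filter_filter' _ _ fun p hp hD' c hc => by
      simpa [(hDsupp c (hD' c hc)).1] using hp c hc
  rw [← Finset.card_union_of_disjoint hdisj]
  have hF : ∀ c ∈ {c ∈ T | P c.1 c.2 = some σ}, P c.1 c.2 = some σ :=
    fun c hc => (Finset.mem_filter.mp hc).2
  have hS : ∀ c ∈ {c ∈ T | c ∈ D}, Supports P σ c :=
    fun c hc => (hDsupp c (Finset.mem_filter.mp hc).2).2
  refine card_le_alpha (Finset.union_subset (Finset.filter_subset _ _) (Finset.filter_subset _ _))
    (hP.indepCells_union hF (hD.mono_s10 fun c hc => (Finset.mem_filter.mp hc).2) hS) fun c hc => ?_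
  exact (Finset.mem_union.mp hc).elim (fun hc => Or.inl (hF c hc)) (hS c)

theorem sum_card_filter_eq_some (T : Finset (Fin n × Fin n)) :
    ∑ σ, {c ∈ T | P c.1 c.2 = some σ}.card = {c ∈ T | P c.1 c.2 ≠ none}.card := by
  simp only [Finset.card_filter]
  rw [Finset.sum_comm]
  refine Finset.sum_congr rfl fun c _ => ?_
  cases P c.1 c.2 <;> simp

theorem hallCond_of_cover {ι : Type*} [Fintype ι] [Nonempty ι] (hP : IsPLS n P)
    (D : Fin n → ι → Finset (Fin n × Fin n)) (hindep : ∀ σ k, IndepCells (D σ k))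
    (hsupp : ∀ σ k, ∀ c ∈ D σ k, P c.1 c.2 = none ∧ Supports P σ c)
    (hcover : ∀ c : Fin n × Fin n, P c.1 c.2 = none →
      Fintype.card ι ≤ ∑ σ, ∑ k, if c ∈ D σ k then 1 else 0) :
    HallCond n P := by
  intro T
  have hempty : Fintype.card ι * {c ∈ T | P c.1 c.2 = none}.card
      ≤ ∑ σ, ∑ k, {c ∈ T | c ∈ D σ k}.card :=
    calc Fintype.card ι * {c ∈ T | P c.1 c.2 = none}.card
        = ∑ c ∈ T, Fintype.card ι * if P c.1 c.2 = none then 1 else 0 := by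
          rw [Finset.card_filter, Finset.mul_sum]
      _ ≤ ∑ c ∈ T, ∑ σ, ∑ k, if c ∈ D σ k then 1 else 0 := by
          refine Finset.sum_le_sum fun c _ => ?_
          split_ifs with h
          · simpa using hcover c h
          · simp
      _ = ∑ σ, ∑ k, {c ∈ T | c ∈ D σ k}.card := by
          simp only [Finset.card_filter]
          rw [Finset.sum_comm]
          exact Finset.sum_congr rfl fun σ _ => Finset.sum_comm
  have hsum : Fintype.card ι * T.card ≤ Fintype.card ι * ∑ σ, alpha P σ T := calc
    Fintype.card ι * T.card = Fintype.card ι * {c ∈ T | P c.1 c.2 ≠ none}.card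
        + Fintype.card ι * {c ∈ T | P c.1 c.2 = none}.card := by
      rw [← mul_add, add_comm, Finset.card_filter_add_card_filter_not]
    _ ≤ ∑ σ, ∑ k, ({c ∈ T | P c.1 c.2 = some σ}.card + {c ∈ T | c ∈ D σ k}.card) := by
      simp only [Finset.sum_add_distrib, Finset.sum_const, Finset.card_univ, smul_eq_mul,
        ← Finset.mul_sum, sum_card_filter_eq_some]
      omega
    _ ≤ ∑ σ, ∑ k, alpha P σ T := Finset.sum_le_sum fun σ _ => Finset.sum_le_sum fun k _ =>
      hP.card_filter_eq_some_add_card_filter_mem_le_alpha (hindep σ k) (hsupp σ k) T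
    _ = Fintype.card ι * ∑ σ, alpha P σ T := by simp [Finset.mul_sum]
  exact Nat.le_of_mul_le_mul_left hsum Fintype.card_pos

theorem Completes.supports {L : Fin n → Fin n → Fin n} (hL : Completes n P L) (i j : Fin n) :
    Supports P (L i j) (i, j) := by
  obtain ⟨⟨hrow, hcol⟩, hagree⟩ := hL
  cases h : P i j with
  | some σ => exact Or.inl (by rw [h, hagree i j σ h])
  | none =>
    refine Or.inr ⟨h, fun j' hj' => ?_, fun i' hi' => ?_⟩
    · have : j' = j := hrow i (hagree i j' _ hj')
      simp [this, h] at hj'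
    · have : i' = i := hcol j (hagree i' j _ hi')
      simp [this, h] at hi'

end PLS

def rectDiagonals {n : ℕ} (i i' j j' : Fin n) : Fin 2 → Finset (Fin n × Fin n) :=
  ![{(i, j), (i', j')}, {(i, j'), (i', j)}]

/-- The `σ`-th block consists of the empty cells in the two rows and two columns missing `σ`;
every empty cell lies in exactly two blocks. -/
def goldwasserCover : Fin 6 → Fin 2 → Finset (Fin 6 × Fin 6) :=
  ![rectDiagonals 3 5 3 4, rectDiagonals 4 5 4 5, rectDiagonals 3 4 3 5,
    rectDiagonals 3 5 2 5, rectDiagonals 4 5 2 3, rectDiagonals 3 4 2 4]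

theorem hallCond_goldwasser : HallCond 6 goldwasser :=
  hallCond_of_cover (by decide) goldwasserCover (by decide) (by decide) (by decide)

theorem not_completable_goldwasser : ¬ ∃ L, Completes 6 goldwasser L := by
  rintro ⟨L, hL⟩
  have row : ∀ i {j j'}, j ≠ j' → L i j ≠ L i j' := fun i _ _ h => (hL.1.1 i).ne h
  have col : ∀ j {i i'}, i ≠ i' → L i j ≠ L i' j := fun j _ _ h => (hL.1.2 j).ne h
  have forced : ∀ {i j p q : Fin 6}, (∀ σ, Supports goldwasser σ (i, j) → σ = p ∨ σ = q) →
      L i j ≠ p → L i j = q := fun hpq hp => (hpq _ (hL.supports _ _)).resolve_left hp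
  rcases (by decide : ∀ σ, Supports goldwasser σ (4, 2) → σ = 5 ∨ σ = 4) _ (hL.supports 4 2)
    with h42 | h42
  · have h32 : L 3 2 = 3 :=
      forced (p := 5) (by decide) fun h => col 2 (by decide) (h.trans h42.symm)
    have h35 : L 3 5 = 2 :=
      forced (p := 3) (by decide) fun h => row 3 (by decide) (h.trans h32.symm)
    have h45 : L 4 5 = 1 :=
      forced (p := 2) (by decide) fun h => col 5 (by decide) (h.trans h35.symm)
    have h44 : L 4 4 = 5 :=
      forced (p := 1) (by decide) fun h => row 4 (by decide) (h.trans h45.symm)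
    exact row 4 (by decide : (2 : Fin 6) ≠ 4) (h42.trans h44.symm)
  · have h43 : L 4 3 = 2 :=
      forced (p := 4) (by decide) fun h => row 4 (by decide) (h.trans h42.symm)
    have h33 : L 3 3 = 0 :=
      forced (p := 2) (by decide) fun h => col 3 (by decide) (h.trans h43.symm)
    have h34 : L 3 4 = 5 :=
      forced (p := 0) (by decide) fun h => row 3 (by decide) (h.trans h33.symm)
    have h44 : L 4 4 = 1 :=
      forced (p := 5) (by decide) fun h => col 4 (by decide) (h.trans h34.symm)
    have h45 : L 4 5 = 2 :=
      forced (p := 1) (by decide) fun h => row 4 (by decide) (h.trans h44.symm)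
    exact row 4 (by decide : (3 : Fin 6) ≠ 5) (h43.trans h45.symm)

theorem stmt10 : HallCond 6 goldwasser ∧ ¬ ∃ L, Completes 6 goldwasser L :=
  ⟨hallCond_goldwasser, not_completable_goldwasser⟩
end

section
/- Let G be a bipartite graph with bipartition (A,B) and let M₁ and M₂ be matchings in G. Then there exists a matching M ⊆ M₁ ∪ M₂ such that M covers every vertex of A covered by M₁ and every vertex of B covered by M₂. -/
open scoped Classical

/-! Call a vertex *reachable* if it can be reached from a vertex of `A` missed by `M₂` along a
path that leaves `A` by `M₁`-edges and leaves `B` by `M₂`-edges. In a bipartite graph such a path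
alternates between `M₁` and `M₂`, so (as `M₁` and `M₂` are matchings) the reachable set `R` is
closed under both `M₁`- and `M₂`-adjacency, and every reachable vertex of `B` is entered by an
`M₁`-edge. Taking `M₁` on `R` and `M₂` off `R` gives a matching; it covers the `M₁`-covered
vertices of `A` because an `A`-vertex outside `R` is covered by `M₂`, and the `M₂`-covered
vertices of `B` because a `B`-vertex inside `R` is covered by `M₁`. -/

namespace SimpleGraph

variable {V : Type*} {G : SimpleGraph V}

namespace Subgraph

variable {M M₁ M₂ : G.Subgraph} {S : Set V}

theorem induce_verts_inter_le (M : G.Subgraph) (S : Set V) : M.induce (M.verts ∩ S) ≤ M :=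
  (induce_mono_right Set.inter_subset_left).trans_eq induce_self_verts

theorem IsMatching.induce_verts_inter (hM : M.IsMatching)
    (hS : ∀ ⦃x y⦄, M.Adj x y → x ∈ S → y ∈ S) : (M.induce (M.verts ∩ S)).IsMatching := by
  rintro v ⟨hv, hvS⟩
  obtain ⟨w, hvw, hw⟩ := hM hv
  exact ⟨w, ⟨⟨hv, hvS⟩, ⟨M.edge_vert hvw.symm, hS hvw hvS⟩, hvw⟩, fun y hy => hw y hy.2.2⟩

theorem IsMatching.sup_induce_inter_compl (h₁ : M₁.IsMatching) (h₂ : M₂.IsMatching)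
    (hS₁ : ∀ ⦃x y⦄, M₁.Adj x y → x ∈ S → y ∈ S) (hS₂ : ∀ ⦃x y⦄, M₂.Adj x y → x ∈ S → y ∈ S) :
    (M₁.induce (M₁.verts ∩ S) ⊔ M₂.induce (M₂.verts ∩ Sᶜ)).IsMatching := by
  have hM₁ := h₁.induce_verts_inter hS₁
  have hM₂ := h₂.induce_verts_inter (S := Sᶜ) fun x y hxy hx hy => hx (hS₂ hxy.symm hy)
  refine hM₁.sup hM₂ ?_
  rw [hM₁.support_eq_verts, hM₂.support_eq_verts]
  exact disjoint_compl_right.mono Set.inter_subset_right Set.inter_subset_right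

end Subgraph

variable {A B : Set V} {M₁ M₂ : G.Subgraph}

def alternatingStep (A B : Set V) (M₁ M₂ : G.Subgraph) (x y : V) : Prop :=
  x ∈ A ∧ M₁.Adj x y ∨ x ∈ B ∧ M₂.Adj x y

def alternatingReach (A B : Set V) (M₁ M₂ : G.Subgraph) : Set V :=
  {v | ∃ a ∈ A, a ∉ M₂.support ∧ Relation.ReflTransGen (alternatingStep A B M₁ M₂) a v}

theorem mem_alternatingReach_of_step {v w : V} (hv : v ∈ alternatingReach A B M₁ M₂)
    (hvw : alternatingStep A B M₁ M₂ v w) : w ∈ alternatingReach A B M₁ M₂ :=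
  let ⟨a, ha, ha₂, hav⟩ := hv
  ⟨a, ha, ha₂, hav.tail hvw⟩

theorem exists_step_of_mem_alternatingReach {v : V} (hv : v ∈ alternatingReach A B M₁ M₂) :
    v ∈ A ∧ v ∉ M₂.support ∨
      ∃ w ∈ alternatingReach A B M₁ M₂, alternatingStep A B M₁ M₂ w v := by
  obtain ⟨a, ha, ha₂, hav⟩ := hv
  rcases hav.cases_tail with rfl | ⟨w, haw, hwv⟩
  · exact .inl ⟨ha, ha₂⟩
  · exact .inr ⟨w, ⟨a, ha, ha₂, haw⟩, hwv⟩

theorem IsBipartiteWith.mem_support_of_mem_alternatingReach (hG : G.IsBipartiteWith A B)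
    {b : V} (hb : b ∈ B) (hbR : b ∈ alternatingReach A B M₁ M₂) : b ∈ M₁.support := by
  rcases exists_step_of_mem_alternatingReach hbR with ⟨hbA, -⟩ | ⟨w, -, ⟨-, hwb⟩ | ⟨hw, hwb⟩⟩
  · exact absurd hb (Set.disjoint_left.mp hG.disjoint hbA)
  · exact ⟨w, hwb.symm⟩
  · exact absurd (hG.mem_of_mem_adj' hb (M₂.adj_sub hwb)) (Set.disjoint_right.mp hG.disjoint hw)

theorem IsBipartiteWith.mem_alternatingReach_of_adj_left (hG : G.IsBipartiteWith A B)
    (h₁ : M₁.IsMatching) {x y : V} (hxy : M₁.Adj x y) (hx : x ∈ alternatingReach A B M₁ M₂) :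
    y ∈ alternatingReach A B M₁ M₂ := by
  rcases hG.mem_of_adj (M₁.adj_sub hxy) with ⟨hxA, -⟩ | ⟨hxB, -⟩
  · exact mem_alternatingReach_of_step hx (.inl ⟨hxA, hxy⟩)
  rcases exists_step_of_mem_alternatingReach hx with ⟨hxA, -⟩ | ⟨w, hw, ⟨-, hwx⟩ | ⟨hwB, hwx⟩⟩
  · exact absurd hxB (Set.disjoint_left.mp hG.disjoint hxA)
  · exact h₁.eq_of_adj_left hwx.symm hxy ▸ hw
  · exact absurd (hG.mem_of_mem_adj' hxB (M₂.adj_sub hwx)) (Set.disjoint_right.mp hG.disjoint hwB)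

theorem IsBipartiteWith.mem_alternatingReach_of_adj_right (hG : G.IsBipartiteWith A B)
    (h₂ : M₂.IsMatching) {x y : V} (hxy : M₂.Adj x y) (hx : x ∈ alternatingReach A B M₁ M₂) :
    y ∈ alternatingReach A B M₁ M₂ := by
  rcases hG.mem_of_adj (M₂.adj_sub hxy) with ⟨hxA, -⟩ | ⟨hxB, -⟩
  swap
  · exact mem_alternatingReach_of_step hx (.inr ⟨hxB, hxy⟩)
  rcases exists_step_of_mem_alternatingReach hx with ⟨-, hx₂⟩ | ⟨w, hw, ⟨hwA, hwx⟩ | ⟨-, hwx⟩⟩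
  · exact absurd ⟨y, hxy⟩ hx₂
  · exact absurd (hG.mem_of_mem_adj hwA (M₁.adj_sub hwx)) (Set.disjoint_left.mp hG.disjoint hxA)
  · exact h₂.eq_of_adj_left hwx.symm hxy ▸ hw

end SimpleGraph

open SimpleGraph Subgraph in
theorem stmt11_general {V : Type*} (G : SimpleGraph V) (A B : Set V)
    (hdisj : Disjoint A B)
    (hbip : ∀ u v, G.Adj u v → (u ∈ A ∧ v ∈ B) ∨ (u ∈ B ∧ v ∈ A))
    (M₁ M₂ : G.Subgraph) (h₁ : M₁.IsMatching) (h₂ : M₂.IsMatching) :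
    ∃ M : G.Subgraph, M.IsMatching ∧ M.edgeSet ⊆ M₁.edgeSet ∪ M₂.edgeSet ∧
      (∀ a ∈ A, a ∈ M₁.support → a ∈ M.support) ∧
      (∀ b ∈ B, b ∈ M₂.support → b ∈ M.support) := by
  have hG : G.IsBipartiteWith A B := ⟨hdisj, hbip⟩
  set R := alternatingReach A B M₁ M₂
  have hM := h₁.sup_induce_inter_compl h₂ (S := R)
    (fun _ _ => hG.mem_alternatingReach_of_adj_left h₁)
    (fun _ _ => hG.mem_alternatingReach_of_adj_right h₂)
  refine ⟨_, hM, ?_, ?_, ?_⟩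
  · rw [Subgraph.edgeSet_sup]
    exact Set.union_subset_union (edgeSet_mono (induce_verts_inter_le _ _))
      (edgeSet_mono (induce_verts_inter_le _ _))
  · intro a ha ha₁
    rw [hM.support_eq_verts]
    by_cases haR : a ∈ R
    · exact .inl ⟨support_subset_verts _ ha₁, haR⟩
    · have ha₂ : a ∈ M₂.support := by_contra fun ha₂ => haR ⟨a, ha, ha₂, .refl⟩
      exact .inr ⟨support_subset_verts _ ha₂, haR⟩
  · intro b hb hb₂
    rw [hM.support_eq_verts]
    by_cases hbR : b ∈ R
    · exact .inl ⟨support_subset_verts _ (hG.mem_support_of_mem_alternatingReach hb hbR), hbR⟩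
    · exact .inr ⟨support_subset_verts _ hb₂, hbR⟩

theorem stmt11 {V : Type*} (G : SimpleGraph V) (A B : Set V)
    (hdisj : Disjoint A B) (hcover : A ∪ B = Set.univ)
    (hbip : ∀ u v, G.Adj u v → (u ∈ A ∧ v ∈ B) ∨ (u ∈ B ∧ v ∈ A))
    (M₁ M₂ : G.Subgraph) (h₁ : M₁.IsMatching) (h₂ : M₂.IsMatching) :
    ∃ M : G.Subgraph, M.IsMatching ∧ M.edgeSet ⊆ M₁.edgeSet ∪ M₂.edgeSet ∧
      (∀ a ∈ A, a ∈ M₁.support → a ∈ M.support) ∧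
      (∀ b ∈ B, b ∈ M₂.support → b ∈ M.support) :=
  stmt11_general G A B hdisj hbip M₁ M₂ h₁ h₂
end
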